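/- Fix integers 0 ≤ d₀ < d and a real number C > 0. Then there exist c > 0 and ε > 0 with the following property: for every x ∈ ℝᵈ with |x| < ε and every family of real numbers (γᵏᵢⱼ)_{i,j,k ∈ {1,…,d}} satisfying γᵏᵢⱼ = γᵏⱼᵢ, |γᵏᵢⱼ| ≤ C for all i, j, k, and |γᵏᵢⱼ| ≤ C|x̂| whenever i, j ≤ d₀ and k > d₀, the symmetric d×d matrix H with entries H_{ij} = (D²f_c(x))_{ij} − Σ_{k=1}^{d} γᵏᵢⱼ (∂f_c/∂x_k)(x) is positive semidefinite; moreover H is positive definite whenever x̂ ≠ 0. -/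

import Mathlib

open scoped BigOperators

/-- `|x̃|²`: squared Euclidean norm of the first `d₀` components of `x`. -/
def tildeSq (d₀ : ℕ) {d : ℕ} (x : EuclideanSpace ℝ (Fin d)) : ℝ :=
  ∑ i : Fin d, if (i : ℕ) < d₀ then x i ^ 2 else 0

/-- `|x̂|²`: squared Euclidean norm of the last `d − d₀` components of `x`. -/
def hatSq (d₀ : ℕ) {d : ℕ} (x : EuclideanSpace ℝ (Fin d)) : ℝ :=
  ∑ i : Fin d, if d₀ ≤ (i : ℕ) then x i ^ 2 else 0

/-- The gradient of `f_c(x) = ½ (c + |x̃|²)|x̂|²`: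
`∂f_c/∂x_k = x_k |x̂|²` for `k ≤ d₀` and `x_k (c + |x̃|²)` for `k > d₀`. -/
def gradFc (c : ℝ) (d₀ : ℕ) {d : ℕ} (x : EuclideanSpace ℝ (Fin d)) (k : Fin d) : ℝ :=
  if (k : ℕ) < d₀ then x k * hatSq d₀ x else x k * (c + tildeSq d₀ x)

/-- The Hessian matrix `D²f_c(x)` of `f_c(x) = ½ (c + |x̃|²)|x̂|²`: entries
`δᵢⱼ|x̂|²` for `i, j ≤ d₀`, `2xᵢxⱼ` if exactly one of `i, j` is `≤ d₀`, and
`δᵢⱼ(c + |x̃|²)` for `i, j > d₀`. -/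
def hessFc (c : ℝ) (d₀ : ℕ) {d : ℕ} (x : EuclideanSpace ℝ (Fin d)) :
    Matrix (Fin d) (Fin d) ℝ :=
  Matrix.of fun i j =>
    if (i : ℕ) < d₀ then
      (if (j : ℕ) < d₀ then (if i = j then hatSq d₀ x else 0) else 2 * x i * x j)
    else
      (if (j : ℕ) < d₀ then 2 * x i * x j else (if i = j then c + tildeSq d₀ x else 0))

/-!
Write `a = |x̂|`, `t = |x̃|` and split `v = (ṽ, v̂)`. The Hessian of `f_c` has quadratic form
`a²|ṽ|² + 4 (x̃·ṽ)(x̂·v̂) + (c + t²)|v̂|²`. For `|x| ≤ c ≤ 1` every `∂ₖf_c` is `O(c a)`, and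
on the `ṽṽ` block the extra hypothesis `|Γᵏᵢⱼ| ≤ C a` for `k > d₀` upgrades the Christoffel
correction to `O(d C c a²)`; elsewhere it is `O(d C c a)`. Choosing `c` small in terms of `d`
and `C` and `ε = c`, the correction and the cross term are absorbed, leaving
`vᵀ H v ≥ (a²|ṽ|² + c|v̂|²)/4`.
-/

open Finset Matrix

section Splitting

variable {d : ℕ} (d₀ : ℕ)

def tildeIdx (d₀ d : ℕ) : Finset (Fin d) := univ.filter fun i => (i : ℕ) < d₀

@[simp]
lemma mem_tildeIdx {i : Fin d} : i ∈ tildeIdx d₀ d ↔ (i : ℕ) < d₀ := by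
  simp [tildeIdx]

variable (x : EuclideanSpace ℝ (Fin d))

lemma tildeSq_eq_sum : tildeSq d₀ x = ∑ i ∈ tildeIdx d₀ d, x i ^ 2 := by
  simp [tildeSq, tildeIdx, sum_filter]

lemma hatSq_eq_sum : hatSq d₀ x = ∑ i ∈ (tildeIdx d₀ d)ᶜ, x i ^ 2 := by
  simp [hatSq, tildeIdx, sum_filter]

lemma tildeSq_nonneg : 0 ≤ tildeSq d₀ x := by
  rw [tildeSq_eq_sum]; positivity

lemma hatSq_nonneg : 0 ≤ hatSq d₀ x := by
  rw [hatSq_eq_sum]; positivity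

lemma tildeSq_add_hatSq : tildeSq d₀ x + hatSq d₀ x = ‖x‖ ^ 2 := by
  rw [tildeSq_eq_sum, hatSq_eq_sum, sum_add_sum_compl, EuclideanSpace.real_norm_sq_eq]

lemma sqrt_tildeSq_le_norm : √(tildeSq d₀ x) ≤ ‖x‖ :=
  (Real.sqrt_le_left (norm_nonneg x)).2 <| by linarith [tildeSq_add_hatSq d₀ x, hatSq_nonneg d₀ x]

lemma sqrt_hatSq_le_norm : √(hatSq d₀ x) ≤ ‖x‖ :=
  (Real.sqrt_le_left (norm_nonneg x)).2 <| by linarith [tildeSq_add_hatSq d₀ x, tildeSq_nonneg d₀ x]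

variable {d₀ x}

lemma sq_le_hatSq {k : Fin d} (hk : d₀ ≤ (k : ℕ)) : x k ^ 2 ≤ hatSq d₀ x := by
  rw [hatSq_eq_sum]
  exact single_le_sum (fun i _ => sq_nonneg (x i)) (by simpa using hk)

lemma abs_le_sqrt_hatSq {k : Fin d} (hk : d₀ ≤ (k : ℕ)) : |x k| ≤ √(hatSq d₀ x) :=
  Real.abs_le_sqrt (sq_le_hatSq hk)

lemma hatSq_pos {k : Fin d} (hk : d₀ ≤ (k : ℕ)) (hxk : x k ≠ 0) : 0 < hatSq d₀ x :=
  (pow_two_pos_of_ne_zero hxk).trans_le (sq_le_hatSq hk)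

end Splitting

section Hessian

variable (c : ℝ) (d₀ : ℕ) {d : ℕ} (x : EuclideanSpace ℝ (Fin d)) (v : Fin d → ℝ)

lemma hessFc_mulVec_apply (i : Fin d) :
    (hessFc c d₀ x *ᵥ v) i =
      if (i : ℕ) < d₀ then hatSq d₀ x * v i + 2 * x i * ∑ j ∈ (tildeIdx d₀ d)ᶜ, x j * v j
      else 2 * x i * ∑ j ∈ tildeIdx d₀ d, x j * v j + (c + tildeSq d₀ x) * v i := by
  rw [mulVec, dotProduct, ← sum_add_sum_compl (tildeIdx d₀ d), mul_sum, mul_sum]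
  split_ifs with hi
  · congr 1
    · rw [sum_eq_single_of_mem i (by simpa using hi)]
      · simp [hessFc, hi]
      · intro j hj hji
        simp [hessFc, hi, (mem_tildeIdx d₀).1 hj, Ne.symm hji]
    · refine sum_congr rfl fun j hj => ?_
      simp [hessFc, hi, not_lt.2 (by simpa using hj : d₀ ≤ (j : ℕ))]
      ring
  · congr 1
    · refine sum_congr rfl fun j hj => ?_
      simp [hessFc, hi, (mem_tildeIdx d₀).1 hj]
      ring
    · rw [sum_eq_single_of_mem i (by simpa using hi)]
      · simp [hessFc, hi]
      · intro j hj hji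
        simp [hessFc, hi, not_lt.2 (by simpa using hj : d₀ ≤ (j : ℕ)), Ne.symm hji]

lemma dotProduct_hessFc_mulVec :
    v ⬝ᵥ hessFc c d₀ x *ᵥ v =
      hatSq d₀ x * ∑ i ∈ tildeIdx d₀ d, v i ^ 2
        + 4 * (∑ i ∈ tildeIdx d₀ d, x i * v i) * ∑ i ∈ (tildeIdx d₀ d)ᶜ, x i * v i
        + (c + tildeSq d₀ x) * ∑ i ∈ (tildeIdx d₀ d)ᶜ, v i ^ 2 := by
  rw [dotProduct, ← sum_add_sum_compl (tildeIdx d₀ d)]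
  have hs : ∑ i ∈ tildeIdx d₀ d, v i * (hessFc c d₀ x *ᵥ v) i
      = ∑ i ∈ tildeIdx d₀ d, (hatSq d₀ x * v i ^ 2
          + 2 * (x i * v i) * ∑ j ∈ (tildeIdx d₀ d)ᶜ, x j * v j) :=
    sum_congr rfl fun i hi => by
      rw [hessFc_mulVec_apply, if_pos ((mem_tildeIdx d₀).1 hi)]; ring
  have hsc : ∑ i ∈ (tildeIdx d₀ d)ᶜ, v i * (hessFc c d₀ x *ᵥ v) i
      = ∑ i ∈ (tildeIdx d₀ d)ᶜ, (2 * (x i * v i) * ∑ j ∈ tildeIdx d₀ d, x j * v j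
          + (c + tildeSq d₀ x) * v i ^ 2) :=
    sum_congr rfl fun i hi => by
      rw [hessFc_mulVec_apply, if_neg (by simpa using hi)]; ring
  rw [hs, hsc, sum_add_distrib, sum_add_distrib, ← mul_sum, ← mul_sum, ← sum_mul, ← sum_mul,
    ← mul_sum, ← mul_sum]
  ring

lemma hessFc_isHermitian : (hessFc c d₀ x).IsHermitian := by
  ext i j
  by_cases hi : (i : ℕ) < d₀ <;> by_cases hj : (j : ℕ) < d₀ <;>
    simp [hessFc, hi, hj, eq_comm] <;> ring

end Hessian

section QuadraticForm

variable {ι : Type*}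

lemma abs_sum_mul_le_sqrt_mul_sqrt (s : Finset ι) (f g : ι → ℝ) :
    |∑ i ∈ s, f i * g i| ≤ √(∑ i ∈ s, f i ^ 2) * √(∑ i ∈ s, g i ^ 2) := by
  rw [← Real.sqrt_mul (sum_nonneg fun i _ => sq_nonneg (f i))]
  exact Real.abs_le_sqrt (sum_mul_sq_le_sq_mul_sq s f g)

variable [Fintype ι]

lemma abs_sum_le_card_mul {f : ι → ℝ} {B : ℝ} (h : ∀ i, |f i| ≤ B) :
    |∑ i, f i| ≤ Fintype.card ι * B :=
  (abs_sum_le_sum_abs _ _).trans <| (sum_le_card_nsmul _ _ _ fun i _ => h i).trans_eq <| by simp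

lemma sum_abs_le_sqrt_card_mul_sqrt (s : Finset ι) (v : ι → ℝ) :
    ∑ i ∈ s, |v i| ≤ √(Fintype.card ι) * √(∑ i ∈ s, v i ^ 2) := by
  rw [← Real.sqrt_mul (Nat.cast_nonneg _)]
  refine (le_abs_self _).trans (Real.abs_le_sqrt ?_)
  calc (∑ i ∈ s, |v i|) ^ 2 ≤ #s * ∑ i ∈ s, |v i| ^ 2 := sq_sum_le_card_mul_sum_sq
    _ ≤ Fintype.card ι * ∑ i ∈ s, v i ^ 2 := by
      simp only [sq_abs]
      gcongr
      exact_mod_cast card_le_univ s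

variable [DecidableEq ι]

lemma abs_dotProduct_mulVec_le_sum_abs (s : Finset ι) (M : Matrix ι ι ℝ) (v : ι → ℝ)
    {K₁ K₂ : ℝ} (h₁ : ∀ i ∈ s, ∀ j ∈ s, |M i j| ≤ K₁) (h₂ : ∀ i j, |M i j| ≤ K₂) :
    |v ⬝ᵥ M *ᵥ v| ≤ K₁ * (∑ i ∈ s, |v i|) ^ 2
      + K₂ * (2 * (∑ i ∈ s, |v i|) * ∑ i ∈ sᶜ, |v i| + (∑ i ∈ sᶜ, |v i|) ^ 2) := by
  set w : ι → ℝ := fun i => |v i|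
  set χ : ι → ℝ := fun i => if i ∈ s then |v i| else 0
  have hpoint : ∀ i j, |v i * (M i j * v j)| ≤ K₁ * (χ i * χ j) + K₂ * (w i * w j - χ i * χ j) := by
    intro i j
    rw [abs_mul, abs_mul, mul_left_comm]
    by_cases hij : i ∈ s ∧ j ∈ s
    · simpa [χ, w, hij.1, hij.2] using
        mul_le_mul_of_nonneg_right (h₁ i hij.1 j hij.2) (by positivity : 0 ≤ |v i| * |v j|)
    · have hχ : χ i * χ j = 0 := by
        by_cases hi : i ∈ s <;> simp_all [χ]
      simpa [hχ, w] using
        mul_le_mul_of_nonneg_right (h₂ i j) (by positivity : 0 ≤ |v i| * |v j|)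
  calc |v ⬝ᵥ M *ᵥ v| = |∑ i, ∑ j, v i * (M i j * v j)| := by
        simp only [dotProduct, mulVec, mul_sum]
    _ ≤ ∑ i, ∑ j, |v i * (M i j * v j)| :=
        (abs_sum_le_sum_abs _ _).trans (sum_le_sum fun i _ => abs_sum_le_sum_abs _ _)
    _ ≤ ∑ i, ∑ j, (K₁ * (χ i * χ j) + K₂ * (w i * w j - χ i * χ j)) := by
        gcongr with i _ j _
        exact hpoint i j
    _ = K₁ * (∑ i, χ i) ^ 2 + K₂ * ((∑ i, w i) ^ 2 - (∑ i, χ i) ^ 2) := by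
        simp only [sq, sum_mul_sum]
        simp only [mul_sum, ← sum_sub_distrib, ← sum_add_distrib]
    _ = _ := by
        rw [Fintype.sum_ite_mem, ← sum_add_sum_compl s]
        ring

lemma abs_dotProduct_mulVec_le (s : Finset ι) (M : Matrix ι ι ℝ) (v : ι → ℝ)
    {K₁ K₂ : ℝ} (hK₁ : 0 ≤ K₁) (hK₂ : 0 ≤ K₂)
    (h₁ : ∀ i ∈ s, ∀ j ∈ s, |M i j| ≤ K₁) (h₂ : ∀ i j, |M i j| ≤ K₂) :
    |v ⬝ᵥ M *ᵥ v| ≤ Fintype.card ι * (K₁ * ∑ i ∈ s, v i ^ 2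
      + K₂ * (2 * √(∑ i ∈ s, v i ^ 2) * √(∑ i ∈ sᶜ, v i ^ 2) + ∑ i ∈ sᶜ, v i ^ 2)) := by
  have hs := sum_abs_le_sqrt_card_mul_sqrt s v
  have hsc := sum_abs_le_sqrt_card_mul_sqrt sᶜ v
  have hn := Real.sq_sqrt (Nat.cast_nonneg (α := ℝ) (Fintype.card ι))
  have hP := Real.sq_sqrt (sum_nonneg fun i (_ : i ∈ s) => sq_nonneg (v i))
  have hQ := Real.sq_sqrt (sum_nonneg fun i (_ : i ∈ sᶜ) => sq_nonneg (v i))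
  refine (abs_dotProduct_mulVec_le_sum_abs s M v h₁ h₂).trans ?_
  calc _ ≤ K₁ * (√(Fintype.card ι) * √(∑ i ∈ s, v i ^ 2)) ^ 2
        + K₂ * (2 * (√(Fintype.card ι) * √(∑ i ∈ s, v i ^ 2))
          * (√(Fintype.card ι) * √(∑ i ∈ sᶜ, v i ^ 2))
          + (√(Fintype.card ι) * √(∑ i ∈ sᶜ, v i ^ 2)) ^ 2) := by
        have := sum_nonneg fun i (_ : i ∈ s) => abs_nonneg (v i)
        have := sum_nonneg fun i (_ : i ∈ sᶜ) => abs_nonneg (v i)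
        gcongr
    _ = _ := by
        rw [mul_pow, mul_pow, hn, hP, hQ]
        linear_combination (2 * K₂ * √(∑ i ∈ s, v i ^ 2) * √(∑ i ∈ sᶜ, v i ^ 2)) * hn

lemma mul_sum_sq_add_mul_sum_compl_sq_pos (s : Finset ι) {A B : ℝ} (hA : 0 < A) (hB : 0 < B)
    {v : ι → ℝ} (hv : v ≠ 0) : 0 < A * ∑ i ∈ s, v i ^ 2 + B * ∑ i ∈ sᶜ, v i ^ 2 := by
  obtain ⟨i, hi⟩ := Function.ne_iff.1 hv
  have hsum : 0 < ∑ i ∈ s, v i ^ 2 + ∑ i ∈ sᶜ, v i ^ 2 := by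
    rw [sum_add_sum_compl]
    exact (pow_two_pos_of_ne_zero hi).trans_le
      (single_le_sum (fun j _ => sq_nonneg (v j)) (mem_univ i))
  have hP := sum_nonneg fun i (_ : i ∈ s) => sq_nonneg (v i)
  have hQ := sum_nonneg fun i (_ : i ∈ sᶜ) => sq_nonneg (v i)
  nlinarith [mul_pos (lt_min hA hB) hsum, mul_le_mul_of_nonneg_right (min_le_left A B) hP,
    mul_le_mul_of_nonneg_right (min_le_right A B) hQ]

end QuadraticForm

section Christoffel

variable {c : ℝ} {d₀ d : ℕ} {x : EuclideanSpace ℝ (Fin d)}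

lemma abs_gradFc_le_of_lt {k : Fin d} (hk : (k : ℕ) < d₀) :
    |gradFc c d₀ x k| ≤ ‖x‖ * hatSq d₀ x := by
  rw [gradFc, if_pos hk, abs_mul, abs_of_nonneg (hatSq_nonneg d₀ x)]
  exact mul_le_mul_of_nonneg_right (by simpa using PiLp.norm_apply_le x k) (hatSq_nonneg d₀ x)

lemma abs_gradFc_le_of_le (hc : 0 ≤ c) {k : Fin d} (hk : d₀ ≤ (k : ℕ)) :
    |gradFc c d₀ x k| ≤ √(hatSq d₀ x) * (c + ‖x‖ ^ 2) := by
  have ht := tildeSq_nonneg d₀ x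
  rw [gradFc, if_neg (not_lt.2 hk), abs_mul, abs_of_nonneg (add_nonneg hc ht)]
  exact mul_le_mul (abs_le_sqrt_hatSq hk)
    (by linarith [tildeSq_add_hatSq d₀ x, hatSq_nonneg d₀ x]) (add_nonneg hc ht)
    (Real.sqrt_nonneg _)

lemma abs_gradFc_le (hc : 0 ≤ c) (hc₁ : c ≤ 1) (hx : ‖x‖ ≤ c) (k : Fin d) :
    |gradFc c d₀ x k| ≤ 2 * c * √(hatSq d₀ x) := by
  have ha := sqrt_hatSq_le_norm d₀ x
  have ha₀ := Real.sqrt_nonneg (hatSq d₀ x)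
  rcases lt_or_ge (k : ℕ) d₀ with hk | hk
  · calc |gradFc c d₀ x k| ≤ ‖x‖ * hatSq d₀ x := abs_gradFc_le_of_lt hk
      _ = (‖x‖ * √(hatSq d₀ x)) * √(hatSq d₀ x) := by
          rw [mul_assoc, Real.mul_self_sqrt (hatSq_nonneg d₀ x)]
      _ ≤ (c * 1) * √(hatSq d₀ x) :=
          mul_le_mul_of_nonneg_right (mul_le_mul hx (by linarith) ha₀ hc) ha₀
      _ ≤ 2 * c * √(hatSq d₀ x) := by nlinarith
  · calc |gradFc c d₀ x k| ≤ √(hatSq d₀ x) * (c + ‖x‖ ^ 2) := abs_gradFc_le_of_le hc hk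
      _ ≤ √(hatSq d₀ x) * (2 * c) := by
          gcongr
          linarith [(pow_le_of_le_one (norm_nonneg x) (hx.trans hc₁) two_ne_zero).trans hx]
      _ = 2 * c * √(hatSq d₀ x) := by ring

variable (c d₀ x) in
def christoffelGrad (γ : Fin d → Fin d → Fin d → ℝ) : Matrix (Fin d) (Fin d) ℝ :=
  of fun i j => ∑ k, γ k i j * gradFc c d₀ x k

variable {γ : Fin d → Fin d → Fin d → ℝ} {C : ℝ}

lemma christoffelGrad_isHermitian (hγ : ∀ k i j, γ k i j = γ k j i) :
    (christoffelGrad c d₀ x γ).IsHermitian := by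
  ext i j
  simp [christoffelGrad, hγ _ i j]

lemma abs_christoffelGrad_le (hc : 0 ≤ c) (hc₁ : c ≤ 1) (hx : ‖x‖ ≤ c) {i j : Fin d}
    (hγ : ∀ k, |γ k i j| ≤ C) :
    |christoffelGrad c d₀ x γ i j| ≤ d * (2 * C * c * √(hatSq d₀ x)) := by
  simpa only [christoffelGrad, of_apply, Fintype.card_fin] using
    abs_sum_le_card_mul (f := fun k => γ k i j * gradFc c d₀ x k) fun k => by
      rw [abs_mul]
      refine (mul_le_mul (hγ k) (abs_gradFc_le hc hc₁ hx k) (abs_nonneg _)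
        ((abs_nonneg _).trans (hγ k))).trans_eq ?_
      ring

lemma abs_christoffelGrad_le_of_lt (hc : 0 ≤ c) (hc₁ : c ≤ 1) (hx : ‖x‖ ≤ c) {i j : Fin d}
    (hγ : ∀ k, |γ k i j| ≤ C) (hγ' : ∀ k : Fin d, d₀ ≤ (k : ℕ) → |γ k i j| ≤ C * √(hatSq d₀ x)) :
    |christoffelGrad c d₀ x γ i j| ≤ d * (2 * C * c * hatSq d₀ x) := by
  have hA := hatSq_nonneg d₀ x
  have hx₂ := (pow_le_of_le_one (norm_nonneg x) (hx.trans hc₁) two_ne_zero).trans hx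
  simpa only [christoffelGrad, of_apply, Fintype.card_fin] using
    abs_sum_le_card_mul (f := fun k => γ k i j * gradFc c d₀ x k) fun k => by
      have hC : 0 ≤ C := (abs_nonneg _).trans (hγ k)
      rw [abs_mul]
      rcases lt_or_ge (k : ℕ) d₀ with hk | hk
      · refine (mul_le_mul (hγ k) (abs_gradFc_le_of_lt hk) (abs_nonneg _) hC).trans ?_
        nlinarith [mul_nonneg hC hA]
      · refine (mul_le_mul (hγ' k hk) (abs_gradFc_le_of_le hc hk) (abs_nonneg _)
          (by positivity)).trans ?_
        calc C * √(hatSq d₀ x) * (√(hatSq d₀ x) * (c + ‖x‖ ^ 2))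
            = C * hatSq d₀ x * (c + ‖x‖ ^ 2) := by
              linear_combination (C * (c + ‖x‖ ^ 2)) * Real.mul_self_sqrt hA
          _ ≤ C * hatSq d₀ x * (2 * c) := by gcongr; linarith
          _ = 2 * C * c * hatSq d₀ x := by ring

lemma abs_dotProduct_christoffelGrad_mulVec_le (hC : 0 ≤ C) (hc : 0 ≤ c) (hc₁ : c ≤ 1)
    (hx : ‖x‖ ≤ c) (hγ : ∀ k i j, |γ k i j| ≤ C)
    (hγ' : ∀ (k i j : Fin d), (i : ℕ) < d₀ → (j : ℕ) < d₀ → d₀ ≤ (k : ℕ) →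
      |γ k i j| ≤ C * √(hatSq d₀ x)) (v : Fin d → ℝ) :
    |v ⬝ᵥ christoffelGrad c d₀ x γ *ᵥ v| ≤ 2 * d ^ 2 * C * c *
      (hatSq d₀ x * ∑ i ∈ tildeIdx d₀ d, v i ^ 2 + √(hatSq d₀ x) *
        (2 * √(∑ i ∈ tildeIdx d₀ d, v i ^ 2) * √(∑ i ∈ (tildeIdx d₀ d)ᶜ, v i ^ 2)
          + ∑ i ∈ (tildeIdx d₀ d)ᶜ, v i ^ 2)) := by
  have hA := hatSq_nonneg d₀ x
  refine (abs_dotProduct_mulVec_le (tildeIdx d₀ d) (christoffelGrad c d₀ x γ) v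
    (by positivity) (by positivity)
    (fun i hi j hj => abs_christoffelGrad_le_of_lt hc hc₁ hx (fun k => hγ k i j)
      fun k hk => hγ' k i j ((mem_tildeIdx d₀).1 hi) ((mem_tildeIdx d₀).1 hj) hk)
    (fun i j => abs_christoffelGrad_le hc hc₁ hx fun k => hγ k i j)).trans_eq ?_
  rw [Fintype.card_fin]
  ring

end Christoffel

lemma quadratic_lower_bound {a t p q c ε κ T U E : ℝ} (ha : 0 ≤ a) (hp : 0 ≤ p)
    (haε : a ≤ ε) (hκ : 0 ≤ κ) (hκ₁ : κ ≤ 1 / 4)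
    (hcoef : (4 * ε + 2 * κ) ^ 2 + 2 * κ * ε ≤ 3 * c / 2)
    (hT : |T| ≤ ε * p) (hU : |U| ≤ a * q)
    (hE : |E| ≤ κ * (a ^ 2 * p ^ 2 + a * (2 * p * q + q ^ 2))) :
    (a ^ 2 * p ^ 2 + c * q ^ 2) / 4 ≤ a ^ 2 * p ^ 2 + 4 * T * U + (c + t ^ 2) * q ^ 2 - E := by
  have hTU : -(ε * p * (a * q)) ≤ T * U := by
    have : |T * U| ≤ ε * p * (a * q) := by
      rw [abs_mul]
      exact mul_le_mul hT hU (abs_nonneg U) (by nlinarith)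
    linarith [neg_abs_le (T * U)]
  have hE' : E ≤ κ * (a ^ 2 * p ^ 2 + a * (2 * p * q + q ^ 2)) := (le_abs_self E).trans hE
  -- with β = 4ε + 2κ the difference is at least (ap - βq)²/2 + (3c/4 - κε - β²/2) q²
  nlinarith [sq_nonneg (a * p - (4 * ε + 2 * κ) * q),
    mul_le_mul_of_nonneg_right hcoef (sq_nonneg q),
    mul_nonneg (sub_nonneg.2 hκ₁) (sq_nonneg (a * p)),
    mul_nonneg (mul_nonneg hκ (sub_nonneg.2 haε)) (sq_nonneg q),
    mul_nonneg (sq_nonneg t) (sq_nonneg q)]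

section Main

variable {c C : ℝ} {d₀ d : ℕ} {x : EuclideanSpace ℝ (Fin d)} {γ : Fin d → Fin d → Fin d → ℝ}

lemma le_dotProduct_hessFc_sub_christoffelGrad_mulVec (hC : 0 ≤ C) (hc : 0 ≤ c)
    (hcC : (4 + 4 * d ^ 2 * C) ^ 2 * c ≤ 1) (hx : ‖x‖ ≤ c)
    (hγ : ∀ k i j, |γ k i j| ≤ C)
    (hγ' : ∀ (k i j : Fin d), (i : ℕ) < d₀ → (j : ℕ) < d₀ → d₀ ≤ (k : ℕ) →
      |γ k i j| ≤ C * √(hatSq d₀ x)) (v : Fin d → ℝ) :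
    (hatSq d₀ x * ∑ i ∈ tildeIdx d₀ d, v i ^ 2 + c * ∑ i ∈ (tildeIdx d₀ d)ᶜ, v i ^ 2) / 4 ≤
      v ⬝ᵥ (hessFc c d₀ x - christoffelGrad c d₀ x γ) *ᵥ v := by
  set m : ℝ := 4 * d ^ 2 * C with hm_def
  have hm : 0 ≤ m := by positivity
  have hc₁ : c ≤ 1 := by nlinarith
  have hmc : m * c ≤ 1 / 8 := by nlinarith
  have hA := hatSq_nonneg d₀ x
  have ht := tildeSq_nonneg d₀ x
  have hP := sum_nonneg fun i (_ : i ∈ tildeIdx d₀ d) => sq_nonneg (v i)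
  have hQ := sum_nonneg fun i (_ : i ∈ (tildeIdx d₀ d)ᶜ) => sq_nonneg (v i)
  have hT : |∑ i ∈ tildeIdx d₀ d, x i * v i| ≤ c * √(∑ i ∈ tildeIdx d₀ d, v i ^ 2) := by
    refine (abs_sum_mul_le_sqrt_mul_sqrt _ _ _).trans ?_
    rw [← tildeSq_eq_sum]
    gcongr
    exact (sqrt_tildeSq_le_norm d₀ x).trans hx
  have hU : |∑ i ∈ (tildeIdx d₀ d)ᶜ, x i * v i|
      ≤ √(hatSq d₀ x) * √(∑ i ∈ (tildeIdx d₀ d)ᶜ, v i ^ 2) := by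
    rw [hatSq_eq_sum]
    exact abs_sum_mul_le_sqrt_mul_sqrt _ _ _
  have hE : |v ⬝ᵥ christoffelGrad c d₀ x γ *ᵥ v| ≤ m * c / 2 *
      (√(hatSq d₀ x) ^ 2 * √(∑ i ∈ tildeIdx d₀ d, v i ^ 2) ^ 2 + √(hatSq d₀ x) *
        (2 * √(∑ i ∈ tildeIdx d₀ d, v i ^ 2) * √(∑ i ∈ (tildeIdx d₀ d)ᶜ, v i ^ 2)
          + √(∑ i ∈ (tildeIdx d₀ d)ᶜ, v i ^ 2) ^ 2)) := by
    refine (abs_dotProduct_christoffelGrad_mulVec_le hC hc hc₁ hx hγ hγ' v).trans_eq ?_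
    rw [Real.sq_sqrt hP, Real.sq_sqrt hQ, Real.sq_sqrt hA, hm_def]
    ring
  -- the discriminant condition of `quadratic_lower_bound` for `ε = c`, `κ = 2 d² C c`
  have hcoef : (4 * c + 2 * (m * c / 2)) ^ 2 + 2 * (m * c / 2) * c ≤ 3 * c / 2 := by
    have : (4 * c + 2 * (m * c / 2)) ^ 2 + 2 * (m * c / 2) * c
        = c * ((4 + m) ^ 2 * c + m * c) := by ring
    rw [this]
    nlinarith
  have key := quadratic_lower_bound (t := √(tildeSq d₀ x)) (Real.sqrt_nonneg (hatSq d₀ x))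
    (Real.sqrt_nonneg _) ((sqrt_hatSq_le_norm d₀ x).trans hx)
    (by positivity) (by linarith) hcoef hT hU hE
  rw [Real.sq_sqrt hA, Real.sq_sqrt hP, Real.sq_sqrt hQ, Real.sq_sqrt ht] at key
  rw [sub_mulVec, dotProduct_sub, dotProduct_hessFc_mulVec]
  linarith

end Main

theorem exists_c_eps_posSemidef_hessian_general
    (d₀ d : ℕ) (C : ℝ) (hC : 0 < C) :
    ∃ c > (0 : ℝ), ∃ ε > (0 : ℝ),
      ∀ x : EuclideanSpace ℝ (Fin d), ‖x‖ < ε →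
      ∀ γ : Fin d → Fin d → Fin d → ℝ,
        (∀ k i j, γ k i j = γ k j i) →
        (∀ k i j, |γ k i j| ≤ C) →
        (∀ (k i j : Fin d), (i : ℕ) < d₀ → (j : ℕ) < d₀ → d₀ ≤ (k : ℕ) →
          |γ k i j| ≤ C * Real.sqrt (hatSq d₀ x)) →
        (Matrix.of fun i j : Fin d =>
            hessFc c d₀ x i j - ∑ k : Fin d, γ k i j * gradFc c d₀ x k).PosSemidef ∧
        ((∃ i : Fin d, d₀ ≤ (i : ℕ) ∧ x i ≠ 0) →
          (Matrix.of fun i j : Fin d =>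
            hessFc c d₀ x i j - ∑ k : Fin d, γ k i j * gradFc c d₀ x k).PosDef) := by
  set c : ℝ := ((4 + 4 * d ^ 2 * C) ^ 2)⁻¹
  have hc : 0 < c := by positivity
  have hcC : (4 + 4 * d ^ 2 * C) ^ 2 * c ≤ 1 := (mul_inv_cancel₀ (by positivity)).le
  refine ⟨c, hc, c, hc, fun x hx γ hsym hγ hγ' => ?_⟩
  change (hessFc c d₀ x - christoffelGrad c d₀ x γ).PosSemidef ∧
    (_ → (hessFc c d₀ x - christoffelGrad c d₀ x γ).PosDef)
  have herm : (hessFc c d₀ x - christoffelGrad c d₀ x γ).IsHermitian :=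
    (hessFc_isHermitian c d₀ x).sub (christoffelGrad_isHermitian hsym)
  have hlow := le_dotProduct_hessFc_sub_christoffelGrad_mulVec hC.le hc.le hcC hx.le hγ hγ'
  refine ⟨.of_dotProduct_mulVec_nonneg herm fun v => ?_, fun ⟨k, hk, hxk⟩ =>
    .of_dotProduct_mulVec_pos herm fun v hv => ?_⟩
  · rw [star_trivial]
    refine le_trans ?_ (hlow v)
    have := hatSq_nonneg d₀ x
    positivity
  · rw [star_trivial]
    refine lt_of_lt_of_le ?_ (hlow v)
    exact div_pos (mul_sum_sq_add_mul_sum_compl_sq_pos _ (hatSq_pos hk hxk) hc hv) four_pos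

/-- Quantitative heart of Proposition 7.1: given `0 ≤ d₀ < d` and `C > 0`, there are
`c > 0` and `ε > 0` such that for every `x` with `|x| < ε` and every symmetric family
`γᵏᵢⱼ` with `|γᵏᵢⱼ| ≤ C`, and `|γᵏᵢⱼ| ≤ C|x̂|` whenever `i, j ≤ d₀ < k`, the matrix
`Hᵢⱼ = (D²f_c(x))ᵢⱼ − Σₖ γᵏᵢⱼ ∂f_c/∂x_k (x)` is positive semidefinite, and positive
definite whenever `x̂ ≠ 0`. -/
theorem exists_c_eps_posSemidef_hessian
    (d₀ d : ℕ) (hd : d₀ < d) (C : ℝ) (hC : 0 < C) :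
    ∃ c > (0 : ℝ), ∃ ε > (0 : ℝ),
      ∀ x : EuclideanSpace ℝ (Fin d), ‖x‖ < ε →
      ∀ γ : Fin d → Fin d → Fin d → ℝ,
        (∀ k i j, γ k i j = γ k j i) →
        (∀ k i j, |γ k i j| ≤ C) →
        (∀ (k i j : Fin d), (i : ℕ) < d₀ → (j : ℕ) < d₀ → d₀ ≤ (k : ℕ) →
          |γ k i j| ≤ C * Real.sqrt (hatSq d₀ x)) →
        (Matrix.of fun i j : Fin d =>
            hessFc c d₀ x i j - ∑ k : Fin d, γ k i j * gradFc c d₀ x k).PosSemidef ∧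
        ((∃ i : Fin d, d₀ ≤ (i : ℕ) ∧ x i ≠ 0) →
          (Matrix.of fun i j : Fin d =>
            hessFc c d₀ x i j - ∑ k : Fin d, γ k i j * gradFc c d₀ x k).PosDef) :=
  exists_c_eps_posSemidef_hessian_general d₀ d C hC
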